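/- Let G = tK_2 with t ≥ 2, with edges {1,2},{3,4},...,{2t−1,2t}, and I = I_c(G) ⊂ K[x_1,...,x_{2t}]. For each k ≥ 1 let u_k = (∏_{j∈[2t]∖{1,3}} x_j) · (∏_{j∈[2t]∖{1,2}} x_j)^{k−1}. Then (I^k : u_k) = (x_1, x_3). In particular v(I_c(tK_2)^k) ≤ (2t−2)k. -/

import Mathlib

open MvPolynomial

/-- The graph `tK_2` on vertex set `Fin (2t)` with edges `{0,1},{2,3},…,{2t−2,2t−1}`. -/
def tK2 (t : ℕ) : SimpleGraph (Fin (2 * t)) where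
  Adj a b := a ≠ b ∧ a.val / 2 = b.val / 2
  symm := by constructor; intro a b h; exact ⟨h.1.symm, h.2.symm⟩
  loopless := by constructor; intro a h; exact h.1 rfl

/-- The complementary edge ideal `I_c(G)`. -/
noncomputable def compEdgeIdeal (K : Type*) [Field K] (V : Type*) [Fintype V] [DecidableEq V]
    (G : SimpleGraph V) : Ideal (MvPolynomial V K) :=
  Ideal.span {m | ∃ i j, G.Adj i j ∧ m = ∏ t ∈ Finset.univ \ {i, j}, X t}

namespace Stmt13Aux

open Finset

variable {K : Type*} [Field K]

noncomputable def ind {n : ℕ} (s : Finset (Fin n)) : Fin n →₀ ℕ :=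
  ∑ j ∈ s, Finsupp.single j 1

lemma ind_apply {n : ℕ} (s : Finset (Fin n)) (j : Fin n) :
    ind s j = if j ∈ s then 1 else 0 := by
  classical
  simp [ind, Finsupp.finset_sum_apply, Finsupp.single_apply]

lemma prod_X_eq {n : ℕ} (s : Finset (Fin n)) :
    (∏ j ∈ s, (X j : MvPolynomial (Fin n) K)) = monomial (ind s) 1 := by
  classical
  induction s using Finset.cons_induction with
  | empty => simp [ind]
  | cons a s ha ih =>
      rw [Finset.prod_cons, ih]
      have hX : (X a : MvPolynomial (Fin n) K) = monomial (Finsupp.single a 1) 1 := rfl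
      rw [hX, monomial_mul, one_mul, ind, ind, Finset.sum_cons]

def pr (t : ℕ) (a : Fin t) : Finset (Fin (2 * t)) :=
  {⟨2 * a.val, by omega⟩, ⟨2 * a.val + 1, by omega⟩}

noncomputable def w (t : ℕ) (a : Fin t) : Fin (2 * t) →₀ ℕ :=
  ind (Finset.univ \ pr t a)

lemma w_apply (t : ℕ) (a : Fin t) (j : Fin (2 * t)) :
    w t a j = if j.val = 2 * a.val ∨ j.val = 2 * a.val + 1 then 0 else 1 := by
  rw [w, ind_apply]
  simp only [Finset.mem_sdiff, Finset.mem_univ, true_and, pr, Finset.mem_insert,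
    Finset.mem_singleton, Fin.ext_iff]
  split_ifs <;> tauto

lemma w_apply' (t : ℕ) (a : Fin t) (j : ℕ) (hj : j < 2 * t) :
    w t a ⟨j, hj⟩ = if j = 2 * a.val ∨ j = 2 * a.val + 1 then 0 else 1 :=
  w_apply t a ⟨j, hj⟩

lemma pair_eq {t : ℕ} {i j : Fin (2 * t)} (hne : i ≠ j) (hdiv : i.val / 2 = j.val / 2) :
    ({i, j} : Finset (Fin (2 * t))) = pr t ⟨i.val / 2, by omega⟩ := by
  have hne' : i.val ≠ j.val := fun h => hne (Fin.ext h)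
  ext x
  simp only [Finset.mem_insert, Finset.mem_singleton, pr, Fin.ext_iff]
  omega

lemma ideal_eq (t : ℕ) :
    compEdgeIdeal K (Fin (2 * t)) (tK2 t) =
      Ideal.span ((fun d => monomial d (1 : K)) '' Set.range (w t)) := by
  unfold compEdgeIdeal
  congr 1
  ext m
  constructor
  · rintro ⟨i, j, ⟨hne, hdiv⟩, rfl⟩
    refine ⟨w t ⟨i.val / 2, by omega⟩, ⟨_, rfl⟩, ?_⟩
    rw [pair_eq hne hdiv, prod_X_eq]; rfl
  · rintro ⟨d, ⟨a, rfl⟩, rfl⟩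
    refine ⟨⟨2 * a.val, by omega⟩, ⟨2 * a.val + 1, by omega⟩, ⟨?_, ?_⟩, ?_⟩
    · simp [Fin.ext_iff]
    · simp; omega
    · rw [prod_X_eq]; rfl

lemma pow_eq (t k : ℕ) :
    (Ideal.span ((fun d => monomial d (1 : K)) '' Set.range (w t))) ^ k =
      Ideal.span ((fun d => monomial d (1 : K)) ''
        {d | ∃ a : Fin k → Fin t, d = ∑ i, w t (a i)}) := by
  induction k with
  | zero =>
      have : {d : Fin (2 * t) →₀ ℕ | ∃ a : Fin 0 → Fin t, d = ∑ i, w t (a i)} = {0} := by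
        ext d
        simp only [Set.mem_setOf_eq, Set.mem_singleton_iff]
        constructor
        · rintro ⟨a, rfl⟩; simp
        · rintro rfl; exact ⟨Fin.elim0, by simp⟩
      rw [pow_zero, this]
      simp [Ideal.span_singleton_one]
  | succ k ih =>
      rw [pow_succ', ih, Ideal.span_mul_span']
      congr 1
      ext x
      constructor
      · rintro ⟨-, ⟨-, ⟨b, rfl⟩, rfl⟩, -, ⟨d, ⟨a, rfl⟩, rfl⟩, rfl⟩
        refine ⟨w t b + ∑ i, w t (a i), ⟨Fin.cons b a, ?_⟩, ?_⟩
        · rw [Fin.sum_univ_succ]; simp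
        · simp [monomial_mul]
      · rintro ⟨-, ⟨a, rfl⟩, rfl⟩
        refine ⟨monomial (w t (a 0)) 1, ⟨_, ⟨a 0, rfl⟩, rfl⟩,
          monomial (∑ i : Fin k, w t (a i.succ)) 1, ⟨_, ⟨fun i => a i.succ, rfl⟩, rfl⟩, ?_⟩
        simp only [monomial_mul, one_mul]
        rw [Fin.sum_univ_succ]

lemma span_pair_prime {n : ℕ} (i0 i2 : Fin n) :
    (Ideal.span {X i0, X i2} : Ideal (MvPolynomial (Fin n) K)).IsPrime := by
  classical
  set g : Fin n → MvPolynomial (Fin n) K := fun j => if j = i0 ∨ j = i2 then 0 else X j with hg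
  have key : ∀ f : MvPolynomial (Fin n) K, f - aeval g f ∈ Ideal.span {X i0, X i2} := by
    intro f
    induction f using MvPolynomial.induction_on with
    | C a => simp
    | add p q hp hq =>
        have := Ideal.add_mem _ hp hq
        simpa [map_add, sub_add_sub_comm] using this
    | mul_X p j hp =>
        rw [map_mul, aeval_X]
        by_cases hj : j = i0 ∨ j = i2
        · rw [hg]; simp only [hj, if_true, mul_zero, sub_zero]
          have hXj : (X j : MvPolynomial (Fin n) K) ∈ Ideal.span {X i0, X i2} := by
            rcases hj with rfl | rfl
            · exact Ideal.subset_span (by simp)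
            · exact Ideal.subset_span (by simp)
          exact Ideal.mul_mem_left _ _ hXj
        · have hgj : g j = X j := if_neg hj
          rw [hgj, show p * X j - aeval g p * X j = (p - aeval g p) * X j by ring]
          exact Ideal.mul_mem_right _ _ hp
  have hker : Ideal.span {X i0, X i2} =
      RingHom.ker (aeval g : MvPolynomial (Fin n) K →ₐ[K] _) := by
    apply le_antisymm
    · rw [Ideal.span_le]
      rintro x hx
      rcases hx with rfl | rfl <;> simp [RingHom.mem_ker, hg]
    · intro f hf
      rw [RingHom.mem_ker] at hf
      have h2 := key f
      rw [hf, sub_zero] at h2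
      exact h2
  rw [hker]
  exact RingHom.ker_isPrime _

end Stmt13Aux

open Stmt13Aux Finset

theorem stmt13 {K : Type*} [Field K] {t : ℕ} (ht : 2 ≤ t)
    (k : ℕ) (hk : 1 ≤ k) (u : MvPolynomial (Fin (2 * t)) K)
    (hu : u = (∏ j ∈ Finset.univ \ {(⟨0, by omega⟩ : Fin (2 * t)), ⟨2, by omega⟩}, X j) *
      (∏ j ∈ Finset.univ \ {(⟨0, by omega⟩ : Fin (2 * t)), ⟨1, by omega⟩}, X j) ^ (k - 1)) :
    Submodule.colon ((compEdgeIdeal K (Fin (2 * t)) (tK2 t)) ^ k) (Ideal.span {u}) =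
      Ideal.span {X ⟨0, by omega⟩, X ⟨2, by omega⟩} ∧
    ∃ f : MvPolynomial (Fin (2 * t)) K, f.IsHomogeneous ((2 * t - 2) * k) ∧
      Submodule.colon ((compEdgeIdeal K (Fin (2 * t)) (tK2 t)) ^ k) (Ideal.span {f}) ∈
        associatedPrimes (MvPolynomial (Fin (2 * t)) K)
          (MvPolynomial (Fin (2 * t)) K ⧸ (compEdgeIdeal K (Fin (2 * t)) (tK2 t)) ^ k) := by
  classical
  obtain ⟨k', rfl⟩ : ∃ k', k = k' + 1 := ⟨k - 1, by omega⟩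
  have h0 : (0 : ℕ) < 2 * t := by omega
  have h1 : (1 : ℕ) < 2 * t := by omega
  have h2 : (2 : ℕ) < 2 * t := by omega
  have h3 : (3 : ℕ) < 2 * t := by omega
  -- generators
  have hg0I : (∏ j ∈ univ \ {(⟨0, h0⟩ : Fin (2 * t)), ⟨1, h1⟩}, (X j : MvPolynomial (Fin (2 * t)) K)) ∈
      compEdgeIdeal K (Fin (2 * t)) (tK2 t) :=
    Ideal.subset_span ⟨⟨0, h0⟩, ⟨1, h1⟩, ⟨Fin.ne_of_val_ne (by omega : (0:ℕ) ≠ 1), (by omega : (0:ℕ)/2 = 1/2)⟩, rfl⟩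
  have hg1I : (∏ j ∈ univ \ {(⟨2, h2⟩ : Fin (2 * t)), ⟨3, h3⟩}, (X j : MvPolynomial (Fin (2 * t)) K)) ∈
      compEdgeIdeal K (Fin (2 * t)) (tK2 t) :=
    Ideal.subset_span ⟨⟨2, h2⟩, ⟨3, h3⟩, ⟨Fin.ne_of_val_ne (by omega : (2:ℕ) ≠ 3), (by omega : (2:ℕ)/2 = 3/2)⟩, rfl⟩
  -- membership in the colon ideal, stated conveniently
  have colon_mem : ∀ r : MvPolynomial (Fin (2 * t)) K, r ∈ Submodule.colon
      ((compEdgeIdeal K (Fin (2 * t)) (tK2 t)) ^ (k' + 1)) (Ideal.span {u}) ↔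
      r * u ∈ (compEdgeIdeal K (Fin (2 * t)) (tK2 t)) ^ (k' + 1) := by
    intro r
    have h := @Submodule.mem_colon_singleton (MvPolynomial (Fin (2 * t)) K) (MvPolynomial (Fin (2 * t)) K) _ _ _
      ((compEdgeIdeal K (Fin (2 * t)) (tK2 t)) ^ (k' + 1)) u r
    rw [smul_eq_mul] at h
    rw [← h, ← Ideal.submodule_span_eq, Submodule.colon_span]
  -- the product identities
  have step1 : X (⟨0, h0⟩ : Fin (2 * t)) *
      (∏ j ∈ univ \ {(⟨0, h0⟩ : Fin (2 * t)), ⟨2, h2⟩}, (X j : MvPolynomial (Fin (2 * t)) K)) =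
      ∏ j ∈ univ \ {(⟨2, h2⟩ : Fin (2 * t))}, X j := by
    rw [Finset.sdiff_insert]
    exact Finset.mul_prod_erase _ _ (by simp [Fin.ext_iff])
  have step2 : (∏ j ∈ univ \ {(⟨2, h2⟩ : Fin (2 * t))}, (X j : MvPolynomial (Fin (2 * t)) K)) =
      X (⟨3, h3⟩ : Fin (2 * t)) * ∏ j ∈ univ \ {(⟨2, h2⟩ : Fin (2 * t)), ⟨3, h3⟩}, X j := by
    rw [Finset.pair_comm, Finset.sdiff_insert]
    exact (Finset.mul_prod_erase _ _ (by simp [Fin.ext_iff])).symm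
  have step3 : X (⟨2, h2⟩ : Fin (2 * t)) *
      (∏ j ∈ univ \ {(⟨0, h0⟩ : Fin (2 * t)), ⟨2, h2⟩}, (X j : MvPolynomial (Fin (2 * t)) K)) =
      ∏ j ∈ univ \ {(⟨0, h0⟩ : Fin (2 * t))}, X j := by
    rw [Finset.pair_comm, Finset.sdiff_insert]
    exact Finset.mul_prod_erase _ _ (by simp [Fin.ext_iff])
  have step4 : (∏ j ∈ univ \ {(⟨0, h0⟩ : Fin (2 * t))}, (X j : MvPolynomial (Fin (2 * t)) K)) =
      X (⟨1, h1⟩ : Fin (2 * t)) * ∏ j ∈ univ \ {(⟨0, h0⟩ : Fin (2 * t)), ⟨1, h1⟩}, X j := by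
    rw [Finset.pair_comm, Finset.sdiff_insert]
    exact (Finset.mul_prod_erase _ _ (by simp [Fin.ext_iff])).symm
  have hid0 : X (⟨0, h0⟩ : Fin (2 * t)) * u =
      X (⟨3, h3⟩ : Fin (2 * t)) *
        ((∏ j ∈ univ \ {(⟨2, h2⟩ : Fin (2 * t)), ⟨3, h3⟩}, X j) *
          (∏ j ∈ univ \ {(⟨0, h0⟩ : Fin (2 * t)), ⟨1, h1⟩}, X j) ^ k') := by
    rw [hu, show k' + 1 - 1 = k' from rfl, ← mul_assoc, step1, step2, mul_assoc]
  have hid2 : X (⟨2, h2⟩ : Fin (2 * t)) * u =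
      X (⟨1, h1⟩ : Fin (2 * t)) *
        (∏ j ∈ univ \ {(⟨0, h0⟩ : Fin (2 * t)), ⟨1, h1⟩}, X j) ^ (k' + 1) := by
    rw [hu, show k' + 1 - 1 = k' from rfl, ← mul_assoc, step3, step4, mul_assoc, ← pow_succ']
  -- the colon ideal equality
  have hcolon : Submodule.colon
      ((compEdgeIdeal K (Fin (2 * t)) (tK2 t)) ^ (k' + 1)) (Ideal.span {u}) =
      Ideal.span {X (⟨0, h0⟩ : Fin (2 * t)), X ⟨2, h2⟩} := by
    apply le_antisymm
    · -- hard direction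
      intro f hf
      by_contra hfP
      have hfu := (colon_mem f).mp hf
      rw [ideal_eq, pow_eq] at hfu
      rw [mem_ideal_span_monomial_image] at hfu
      rw [show ({X (⟨0, h0⟩ : Fin (2 * t)), X ⟨2, h2⟩} : Set (MvPolynomial (Fin (2 * t)) K)) =
          X '' {(⟨0, h0⟩ : Fin (2 * t)), ⟨2, h2⟩} from (Set.image_pair X (⟨0, h0⟩ : Fin (2 * t)) ⟨2, h2⟩).symm,
        mem_ideal_span_X_image] at hfP
      push_neg at hfP
      obtain ⟨m, hm, hmz⟩ := hfP
      have hm0 : m ⟨0, h0⟩ = 0 := hmz _ (Set.mem_insert _ _)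
      have hm2 : m ⟨2, h2⟩ = 0 := hmz _ (Set.mem_insert_of_mem _ rfl)
      have hu' : u = monomial (ind (univ \ {(⟨0, h0⟩ : Fin (2 * t)), ⟨2, h2⟩}) +
          k' • ind (univ \ {(⟨0, h0⟩ : Fin (2 * t)), ⟨1, h1⟩})) 1 := by
        rw [hu, prod_X_eq, prod_X_eq, monomial_pow, one_pow, monomial_mul, one_mul]
        rfl
      set ε := ind (univ \ {(⟨0, h0⟩ : Fin (2 * t)), ⟨2, h2⟩}) +
          k' • ind (univ \ {(⟨0, h0⟩ : Fin (2 * t)), ⟨1, h1⟩}) with hε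
      have hε0 : ε ⟨0, h0⟩ = 0 := by
        rw [hε, Finsupp.add_apply, Finsupp.smul_apply, ind_apply, ind_apply]
        simp [Fin.ext_iff]
      have hε2 : ε ⟨2, h2⟩ = k' := by
        rw [hε, Finsupp.add_apply, Finsupp.smul_apply, ind_apply, ind_apply]
        simp [Fin.ext_iff]
      obtain ⟨d, ⟨a, rfl⟩, hle⟩ := hfu (m + ε) (by
        rw [mem_support_iff, hu', coeff_mul_monomial]
        simpa using mem_support_iff.mp hm)
      rw [Finsupp.le_def] at hle
      have key0 : ∀ i : Fin (k' + 1), (a i).val = 0 := by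
        have h0' := hle ⟨0, h0⟩
        rw [Finsupp.finset_sum_apply, Finsupp.add_apply, hm0, hε0] at h0'
        intro i
        have := Finset.sum_eq_zero_iff.mp (Nat.le_zero.mp h0') i (Finset.mem_univ i)
        rw [w_apply'] at this
        by_cases h : (0:ℕ) = 2 * (a i).val ∨ (0:ℕ) = 2 * (a i).val + 1
        · rcases h with h | h <;> omega
        · rw [if_neg h] at this
          exact absurd this one_ne_zero
      have h2' := hle ⟨2, h2⟩
      rw [Finsupp.finset_sum_apply, Finsupp.add_apply, hm2, hε2] at h2'
      have hsum : ∑ i : Fin (k' + 1), (w t (a i)) ⟨2, h2⟩ = k' + 1 := by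
        rw [Finset.sum_congr rfl (fun i _ => ?_), Finset.sum_const, smul_eq_mul, mul_one,
          Finset.card_univ, Fintype.card_fin]
        rw [w_apply', key0 i]
        norm_num
      omega
    · -- easy direction
      rw [Ideal.span_le]
      intro x hx
      simp only [Set.mem_insert_iff, Set.mem_singleton_iff] at hx
      rcases hx with rfl | rfl
      · apply SetLike.mem_coe.mpr
        rw [colon_mem, hid0]
        refine Ideal.mul_mem_left _ _ ?_
        rw [pow_succ']
        exact Ideal.mul_mem_mul hg1I (Ideal.pow_mem_pow hg0I k')
      · apply SetLike.mem_coe.mpr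
        rw [colon_mem, hid2]
        exact Ideal.mul_mem_left _ _ (Ideal.pow_mem_pow hg0I (k' + 1))
  constructor
  · exact hcolon
  refine ⟨u, ?_, ?_⟩
  · -- homogeneity
    have hcard1 : (univ \ {(⟨0, h0⟩ : Fin (2 * t)), (⟨2, h2⟩ : Fin (2 * t))}).card = 2 * t - 2 := by
      rw [Finset.card_sdiff_of_subset (Finset.subset_univ _), Finset.card_univ, Fintype.card_fin,
        Finset.card_insert_of_notMem (by simp [Fin.ext_iff]), Finset.card_singleton]
    have hcard2 : (univ \ {(⟨0, h0⟩ : Fin (2 * t)), (⟨1, h1⟩ : Fin (2 * t))}).card = 2 * t - 2 := by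
      rw [Finset.card_sdiff_of_subset (Finset.subset_univ _), Finset.card_univ, Fintype.card_fin,
        Finset.card_insert_of_notMem (by simp [Fin.ext_iff]), Finset.card_singleton]
    have hA : (∏ j ∈ univ \ {(⟨0, h0⟩ : Fin (2 * t)), (⟨2, h2⟩ : Fin (2 * t))}, (X j : MvPolynomial (Fin (2 * t)) K)).IsHomogeneous
        (2 * t - 2) := by
      have := MvPolynomial.IsHomogeneous.prod (univ \ {(⟨0, h0⟩ : Fin (2 * t)), (⟨2, h2⟩ : Fin (2 * t))})
        X (fun _ => 1) (fun i _ => isHomogeneous_X K i)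
      simpa [hcard1] using this
    have hB : (∏ j ∈ univ \ {(⟨0, h0⟩ : Fin (2 * t)), (⟨1, h1⟩ : Fin (2 * t))}, (X j : MvPolynomial (Fin (2 * t)) K)).IsHomogeneous
        (2 * t - 2) := by
      have := MvPolynomial.IsHomogeneous.prod (univ \ {(⟨0, h0⟩ : Fin (2 * t)), (⟨1, h1⟩ : Fin (2 * t))})
        X (fun _ => 1) (fun i _ => isHomogeneous_X K i)
      simpa [hcard2] using this
    rw [hu, show (2 * t - 2) * (k' + 1) = (2 * t - 2) + (2 * t - 2) * k' by ring]
    exact hA.mul (hB.pow k')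
  · -- associated prime
    rw [hcolon]
    refine ⟨span_pair_prime _ _, Submodule.Quotient.mk u, ?_⟩
    rw [← hcolon]
    have hP := span_pair_prime (K := K) (⟨0, h0⟩ : Fin (2 * t)) ⟨2, h2⟩
    rw [← hcolon] at hP
    rw [← hP.radical]
    congr 1
    ext r
    rw [Submodule.mem_colon_singleton, Submodule.mem_bot, colon_mem r,
      ← Submodule.Quotient.mk_smul, Submodule.Quotient.mk_eq_zero, smul_eq_mul]
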